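/- arXiv:2403.12333 — 2 statements merged into one kernel-verified Lean document; each statement's English description precedes it below -/
import Mathlib

section
/- For c > 0 define f_c(z) = exp(c z²) and Φ_c(z) = ∫₀^z exp(−c s²) ds for z ≥ 0. Then for every A > 0, every B ≥ 0, every b ≥ 0 and every r₀ > 0 there exist c > 0 and ε₀ > 0 such that for all z ∈ [0, r₀] and all ε ∈ (0, ε₀]: 2(B + 1)·z·Φ_c(z)·f_c(z) − 2A·c·z·Φ_c(z)·f_c(z) − A + ε·b·Φ_c(z)·f_c(z) ≤ −A/2. -/
/-- **The analytic inequality behind the exit-time bound (Lemma `epsde`).**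
For `c > 0` set `f_c(z) = exp(c z²)` and `Φ_c(z) = ∫₀^z exp(−c s²) ds`. Then for every
`A > 0`, `B ≥ 0`, `b ≥ 0`, `r₀ > 0` there exist `c > 0` and `ε₀ > 0` such that for all
`z ∈ [0, r₀]` and all `ε ∈ (0, ε₀]`:
`2(B+1)·z·Φ_c(z)·f_c(z) − 2A·c·z·Φ_c(z)·f_c(z) − A + ε·b·Φ_c(z)·f_c(z) ≤ −A/2`. -/
theorem exists_c_eps_generator_inequality
    (A : ℝ) (hA : 0 < A) (B : ℝ) (hB : 0 ≤ B) (b : ℝ) (hb : 0 ≤ b)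
    (r₀ : ℝ) (hr₀ : 0 < r₀) :
    ∃ c > (0 : ℝ), ∃ ε₀ > (0 : ℝ), ∀ z ∈ Set.Icc (0 : ℝ) r₀, ∀ ε ∈ Set.Ioc (0 : ℝ) ε₀,
      2 * (B + 1) * z * (∫ s in (0 : ℝ)..z, Real.exp (-c * s ^ 2)) * Real.exp (c * z ^ 2)
        - 2 * A * c * z * (∫ s in (0 : ℝ)..z, Real.exp (-c * s ^ 2)) * Real.exp (c * z ^ 2)
        - A
        + ε * b * (∫ s in (0 : ℝ)..z, Real.exp (-c * s ^ 2)) * Real.exp (c * z ^ 2)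
      ≤ -A / 2 := by
  set c : ℝ := (B + 1) / A with hc_def
  have hc : 0 < c := div_pos (by linarith) hA
  have hAc : A * c = B + 1 := by
    rw [hc_def]; field_simp
  set M : ℝ := b * r₀ * Real.exp (c * r₀ ^ 2) with hM_def
  have hM : 0 ≤ M := by positivity
  refine ⟨c, hc, A / (2 * (M + 1)), by positivity, ?_⟩
  rintro z ⟨hz0, hzr⟩ ε ⟨hε0, hεe⟩
  set Φ : ℝ := ∫ s in (0 : ℝ)..z, Real.exp (-c * s ^ 2) with hΦ_def
  have hΦ0 : 0 ≤ Φ := intervalIntegral.integral_nonneg hz0 (fun s _ => (Real.exp_pos _).le)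
  have hΦle : Φ ≤ z := by
    have : Φ ≤ ∫ _ in (0 : ℝ)..z, (1 : ℝ) := by
      apply intervalIntegral.integral_mono_on hz0
      · exact (Continuous.intervalIntegrable (by continuity) 0 z)
      · exact intervalIntegrable_const
      · intro s _
        exact Real.exp_le_one_iff.mpr (by nlinarith)
    simpa using this
  have hf : Real.exp (c * z ^ 2) ≤ Real.exp (c * r₀ ^ 2) := by
    apply Real.exp_le_exp.mpr
    have : z ^ 2 ≤ r₀ ^ 2 := by nlinarith
    nlinarith
  have hkey : ε * b * Φ * Real.exp (c * z ^ 2) ≤ A / 2 := by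
    have h1 : ε * b * Φ * Real.exp (c * z ^ 2) ≤ ε * M := by
      have : b * Φ * Real.exp (c * z ^ 2) ≤ b * r₀ * Real.exp (c * r₀ ^ 2) := by
        have hΦr : Φ ≤ r₀ := hΦle.trans hzr
        have h1 : b * Φ ≤ b * r₀ := mul_le_mul_of_nonneg_left hΦr hb
        exact mul_le_mul h1 hf (Real.exp_pos _).le (by positivity)
      nlinarith
    have h2 : ε * M ≤ A / (2 * (M + 1)) * (M + 1) := by
      have : ε * M ≤ A / (2 * (M + 1)) * M :=
        mul_le_mul_of_nonneg_right hεe hM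
      have h3 : A / (2 * (M + 1)) * M ≤ A / (2 * (M + 1)) * (M + 1) := by
        apply mul_le_mul_of_nonneg_left (by linarith) (by positivity)
      linarith
    have h4 : A / (2 * (M + 1)) * (M + 1) = A / 2 := by
      field_simp
    linarith
  have hcancel : 2 * (B + 1) * z * Φ * Real.exp (c * z ^ 2)
      - 2 * A * c * z * Φ * Real.exp (c * z ^ 2) = 0 := by
    rw [show 2 * A * c * z * Φ * Real.exp (c * z ^ 2)
        = 2 * (A * c) * z * Φ * Real.exp (c * z ^ 2) by ring, hAc]
    ring
  linarith
end

section
/- Let (𝓕_n)_{n ∈ ℕ} be a filtration on a probability space, and let (σ_n)_{n ∈ ℕ} be nondecreasing, nonnegative random variables such that σ_n is 𝓕_n-measurable for each n. Let c₁, c₂ > 0 and suppose E[σ_0²] ≤ c₁, E[(σ_{n+1} − σ_n)² | 𝓕_n] ≤ c₁ almost surely for every n, and P(σ_{n+1} − σ_n ≤ c₂ | 𝓕_n) ≤ 1/2 almost surely for every n. Then for every δ > 0 there exists L > 0 (depending only on δ, c₁, c₂) such that for every a ≥ 0, P(there exists n ∈ ℕ with σ_n ∈ [a, a + L]) ≥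 1 − δ. -/
open MeasureTheory

private lemma aux_setIntegral_le {Ω : Type} {m m0 : MeasurableSpace Ω} {P : Measure Ω}
    [IsProbabilityMeasure P] (hm : m ≤ m0) {f : Ω → ℝ} (hf : Integrable f P)
    {A : Set Ω} (hA : MeasurableSet[m] A) {c : ℝ}
    (hc : ∀ᵐ ω ∂P, (P[f|m]) ω ≤ c) :
    ∫ ω in A, f ω ∂P ≤ c * (P A).toReal := by
  calc ∫ ω in A, f ω ∂P = ∫ ω in A, (P[f|m]) ω ∂P := (setIntegral_condExp hm hf hA).symm
    _ ≤ ∫ _ in A, c ∂P :=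
        integral_mono_ae integrable_condExp.restrict (integrable_const c)
          (ae_restrict_of_ae hc)
    _ = (P A).toReal * c := by rw [setIntegral_const, smul_eq_mul]; rfl
    _ = c * (P A).toReal := mul_comm _ _

private lemma aux_inter_le {Ω : Type} {m m0 : MeasurableSpace Ω} {P : Measure Ω}
    [IsProbabilityMeasure P] (hm : m ≤ m0) {A B : Set Ω}
    (hA : MeasurableSet[m] A) (hB : MeasurableSet B) {c : ℝ}
    (hc : ∀ᵐ ω ∂P, (P[Set.indicator B (fun _ => (1:ℝ))|m]) ω ≤ c) :
    (P (A ∩ B)).toReal ≤ c * (P A).toReal := by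
  have h0 : ∫ ω in A, Set.indicator B (fun _ => (1:ℝ)) ω ∂P = (P (A ∩ B)).toReal := by
    rw [setIntegral_indicator hB, setIntegral_const, smul_eq_mul, mul_one]; rfl
  rw [← h0]
  exact aux_setIntegral_le hm ((integrable_const (1:ℝ)).indicator hB) hA hc

/-- Occupation bound: the expected number of indices `n` with `σ n ∈ (α, α + c₂]` is at most 4. -/
private lemma aux_occupation {Ω : Type} {m0 : MeasurableSpace Ω} {P : Measure Ω}
    [IsProbabilityMeasure P] (ℱ : Filtration ℕ m0) (σ : ℕ → Ω → ℝ)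
    (hadapted : ∀ n, StronglyMeasurable[ℱ n] (σ n))
    (hmono : ∀ n, ∀ᵐ ω ∂P, σ n ω ≤ σ (n + 1) ω)
    {c₂ : ℝ} (hc₂ : 0 < c₂)
    (hcondp : ∀ n, ∀ᵐ ω ∂P,
      (P[Set.indicator {ω' | σ (n + 1) ω' - σ n ω' ≤ c₂} (fun _ => (1 : ℝ)) | ℱ n]) ω ≤ 1 / 2)
    (α : ℝ) (m : ℕ) :
    ∑ n ∈ Finset.range m, (P ((σ n) ⁻¹' Set.Ioc α (α + c₂))).toReal ≤ 4 := by
  have hσm : ∀ n, Measurable (σ n) := fun n =>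
    ((hadapted n).measurable).mono (ℱ.le n) le_rfl
  set V : ℕ → Set Ω := fun n => (σ n) ⁻¹' Set.Ioc α (α + c₂) with hVdef
  set D : ℕ → Set Ω := fun n => (σ n) ⁻¹' Set.Iic α with hDdef
  have hVmF : ∀ n, MeasurableSet[ℱ n] (V n) := fun n =>
    (hadapted n).measurable measurableSet_Ioc
  have hDm : ∀ n, MeasurableSet (D n) := fun n => (hσm n) measurableSet_Iic
  have hstep : ∀ n, (P (V (n+1))).toReal ≤
      ((P (D n)).toReal - (P (D (n+1))).toReal) + (1/2) * (P (V n)).toReal := by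
    intro n
    set A : Set Ω := {ω' | σ (n + 1) ω' - σ n ω' ≤ c₂} with hAdef
    have hAm : MeasurableSet A :=
      measurableSet_le ((hσm (n+1)).sub (hσm n)) measurable_const
    have hsub : V (n+1) ≤ᵐ[P] (((D n \ D (n+1)) ∪ (V n ∩ A) : Set Ω)) := by
      filter_upwards [hmono n] with ω hω
      simp only [le_Prop_eq]
      intro hmem
      have h1 : α < σ (n+1) ω := hmem.1
      have h2 : σ (n+1) ω ≤ α + c₂ := hmem.2
      by_cases hD : σ n ω ≤ α
      · exact Or.inl ⟨hD, fun hc => absurd h1 (not_lt.2 hc)⟩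
      · push_neg at hD
        exact Or.inr ⟨⟨hD, le_trans hω h2⟩, by simp only [hAdef, Set.mem_setOf_eq]; linarith⟩
    have h1 : P (V (n+1)) ≤ P (D n \ D (n+1)) + P (V n ∩ A) :=
      (measure_mono_ae hsub).trans (measure_union_le _ _)
    have h1' : (P (V (n+1))).toReal ≤ (P (D n \ D (n+1))).toReal + (P (V n ∩ A)).toReal := by
      rw [← ENNReal.toReal_add (measure_ne_top _ _) (measure_ne_top _ _)]
      exact ENNReal.toReal_mono (ENNReal.add_ne_top.2 ⟨measure_ne_top _ _, measure_ne_top _ _⟩) h1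
    have h2 : P (D n ∩ D (n+1)) = P (D (n+1)) := by
      refine le_antisymm (measure_mono Set.inter_subset_right) (measure_mono_ae ?_)
      filter_upwards [hmono n] with ω hω
      simp only [le_Prop_eq]
      intro h
      exact ⟨le_trans hω h, h⟩
    have h3 : P (D n ∩ D (n+1)) + P (D n \ D (n+1)) = P (D n) :=
      measure_inter_add_diff _ (hDm (n+1))
    have h4 : (P (D n \ D (n+1))).toReal = (P (D n)).toReal - (P (D (n+1))).toReal := by
      have h5 := congrArg ENNReal.toReal h3
      rw [ENNReal.toReal_add (measure_ne_top _ _) (measure_ne_top _ _), h2] at h5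
      linarith
    have hVA : (P (V n ∩ A)).toReal ≤ 1/2 * (P (V n)).toReal :=
      aux_inter_le (ℱ.le n) (hVmF n) hAm (hcondp n)
    linarith
  rcases Nat.eq_zero_or_pos m with rfl | hmpos
  · simp
  obtain ⟨k, rfl⟩ := Nat.exists_eq_succ_of_ne_zero hmpos.ne'
  have hv0 : ∀ n, (0:ℝ) ≤ (P (V n)).toReal := fun n => ENNReal.toReal_nonneg
  have hle1 : ∀ s : Set Ω, (P s).toReal ≤ 1 := fun s => by
    rw [← ENNReal.toReal_one]
    exact ENNReal.toReal_mono ENNReal.one_ne_top prob_le_one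
  have hsum1 : ∑ n ∈ Finset.range (k+1), (P (V n)).toReal =
      (∑ n ∈ Finset.range k, (P (V (n+1))).toReal) + (P (V 0)).toReal :=
    Finset.sum_range_succ' _ k
  have hsum2 : ∑ n ∈ Finset.range k, (P (V (n+1))).toReal ≤
      (∑ n ∈ Finset.range k, ((P (D n)).toReal - (P (D (n+1))).toReal)) +
        (1/2) * ∑ n ∈ Finset.range k, (P (V n)).toReal := by
    rw [Finset.mul_sum, ← Finset.sum_add_distrib]
    exact Finset.sum_le_sum fun n _ => hstep n
  have hsum3 : ∑ n ∈ Finset.range k, ((P (D n)).toReal - (P (D (n+1))).toReal) =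
      (P (D 0)).toReal - (P (D k)).toReal :=
    Finset.sum_range_sub' (fun n => (P (D n)).toReal) k
  have hsum4 : ∑ n ∈ Finset.range k, (P (V n)).toReal ≤
      ∑ n ∈ Finset.range (k+1), (P (V n)).toReal :=
    Finset.sum_le_sum_of_subset_of_nonneg (Finset.range_subset_range.2 (Nat.le_succ k))
      (fun i _ _ => hv0 i)
  have hd0 : (P (D 0)).toReal ≤ 1 := hle1 _
  have hdk : (0:ℝ) ≤ (P (D k)).toReal := ENNReal.toReal_nonneg
  have hV0 : (P (V 0)).toReal ≤ 1 := hle1 _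
  linarith

set_option maxHeartbeats 1600000 in
/-- **Uniform interval-hitting property of a renewal-type sequence of arrival times.**
Given `c₁, c₂ > 0` and `δ > 0`, there is `L > 0` (depending only on `δ, c₁, c₂`) such that:
for every filtered probability space and every nondecreasing, nonnegative, adapted sequence
`(σ_n)` of arrival times with `E[σ_0²] ≤ c₁`, `E[(σ_{n+1} − σ_n)² | 𝓕_n] ≤ c₁` a.s., and
`P(σ_{n+1} − σ_n ≤ c₂ | 𝓕_n) ≤ 1/2` a.s. for every `n`, one has, for every `a ≥ 0`,
`P(∃ n, σ_n ∈ [a, a + L]) ≥ 1 − δ`. -/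
theorem renewal_interval_hitting
    (c₁ c₂ δ : ℝ) (hc₁ : 0 < c₁) (hc₂ : 0 < c₂) (hδ : 0 < δ) :
    ∃ L > (0 : ℝ),
      ∀ (Ω : Type) (mΩ : MeasurableSpace Ω) (P : Measure Ω),
        IsProbabilityMeasure P →
        ∀ (ℱ : Filtration ℕ mΩ) (σ : ℕ → Ω → ℝ),
        (∀ n, ∀ᵐ ω ∂P, σ n ω ≤ σ (n + 1) ω) →
        (∀ n, ∀ᵐ ω ∂P, 0 ≤ σ n ω) →
        (∀ n, StronglyMeasurable[ℱ n] (σ n)) →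
        Integrable (fun ω => (σ 0 ω) ^ 2) P →
        (∫ ω, (σ 0 ω) ^ 2 ∂P ≤ c₁) →
        (∀ n, Integrable (fun ω => (σ (n + 1) ω - σ n ω) ^ 2) P) →
        (∀ n, ∀ᵐ ω ∂P,
          (P[fun ω' => (σ (n + 1) ω' - σ n ω') ^ 2 | ℱ n]) ω ≤ c₁) →
        (∀ n, ∀ᵐ ω ∂P,
          (P[Set.indicator {ω' | σ (n + 1) ω' - σ n ω' ≤ c₂} (fun _ => (1 : ℝ)) | ℱ n]) ω
            ≤ 1 / 2) →
        ∀ a : ℝ, 0 ≤ a →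
          ENNReal.ofReal (1 - δ) ≤ P {ω | ∃ n : ℕ, σ n ω ∈ Set.Icc a (a + L)} := by
  classical
  set L : ℝ := 1 + max (Real.sqrt (10 * c₁ / δ)) (8 * c₁ / (c₂ * δ)) with hLdef
  have hmax0 : 0 ≤ max (Real.sqrt (10 * c₁ / δ)) (8 * c₁ / (c₂ * δ)) :=
    le_trans (Real.sqrt_nonneg _) (le_max_left _ _)
  have hL1 : 1 ≤ L := by rw [hLdef]; linarith
  have hLpos : 0 < L := by linarith
  have hLsq : 10 * c₁ / δ ≤ L ^ 2 := by
    have h1 : Real.sqrt (10 * c₁ / δ) ≤ L := by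
      rw [hLdef]; have := le_max_left (Real.sqrt (10 * c₁ / δ)) (8 * c₁ / (c₂ * δ)); linarith
    calc 10 * c₁ / δ = (Real.sqrt (10 * c₁ / δ)) ^ 2 := (Real.sq_sqrt (by positivity)).symm
      _ ≤ L ^ 2 := by nlinarith [Real.sqrt_nonneg (10 * c₁ / δ)]
  have hLb : 8 * c₁ / (c₂ * δ) ≤ L := by
    rw [hLdef]; have := le_max_right (Real.sqrt (10 * c₁ / δ)) (8 * c₁ / (c₂ * δ)); linarith
  have hnum1 : 5 * c₁ / L ^ 2 ≤ δ / 2 := by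
    rw [div_le_div_iff₀ (by positivity) (by norm_num : (0:ℝ) < 2)]
    have h2 : 10 * c₁ ≤ L ^ 2 * δ := (div_le_iff₀ hδ).1 hLsq
    linarith
  have hnum2 : 4 * c₁ / (c₂ * L) ≤ δ / 2 := by
    rw [div_le_div_iff₀ (by positivity) (by norm_num : (0:ℝ) < 2)]
    have h2 : 8 * c₁ ≤ L * (c₂ * δ) := (div_le_iff₀ (by positivity)).1 hLb
    linarith
  refine ⟨L, hLpos, ?_⟩
  intro Ω mΩ P hP ℱ σ hmono hnonneg hadapted hint0 hm0 hintΔ hcond2 hcondp a ha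
  have hσm : ∀ n, Measurable (σ n) := fun n =>
    ((hadapted n).measurable).mono (ℱ.le n) le_rfl
  set J : ℕ := Nat.ceil (a / c₂) with hJdef
  set V : ℕ → ℕ → Set Ω := fun n j =>
    (σ n) ⁻¹' Set.Ioc (a - ((j:ℝ)+1)*c₂) (a - ((j:ℝ)+1)*c₂ + c₂) with hVdef
  set E : ℕ × ℕ → Set Ω := fun p =>
    V p.2 p.1 ∩ {ω | L + (p.1:ℝ)*c₂ < σ (p.2+1) ω - σ p.2 ω} with hEdef
  set B : Set Ω := {ω | a + L < σ 0 ω} with hBdef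
  set C : Set Ω := {ω | ∀ n, σ n ω < a} with hCdef
  have hVm0 : ∀ n j, MeasurableSet (V n j) := fun n j => (hσm n) measurableSet_Ioc
  have hVmF : ∀ n j, MeasurableSet[ℱ n] (V n j) := fun n j =>
    (hadapted n).measurable measurableSet_Ioc
  have hEm : ∀ p, MeasurableSet (E p) := fun p =>
    (hVm0 _ _).inter (measurableSet_lt measurable_const ((hσm _).sub (hσm _)))
  have hBm : MeasurableSet B := measurableSet_lt measurable_const (hσm 0)
  have hocc : ∀ j m, ∑ n ∈ Finset.range m, (P (V n j)).toReal ≤ 4 := fun j m =>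
    aux_occupation ℱ σ hadapted hmono hc₂ hcondp (a - ((j:ℝ)+1)*c₂) m
  have hVsum : ∀ j, ∑' n, P (V n j) ≤ ENNReal.ofReal 4 := by
    intro j
    rw [ENNReal.tsum_eq_iSup_sum]
    refine iSup_le fun s => ?_
    obtain ⟨m, hm⟩ := s.exists_nat_subset_range
    calc ∑ n ∈ s, P (V n j) ≤ ∑ n ∈ Finset.range m, P (V n j) :=
          Finset.sum_le_sum_of_subset hm
      _ = ENNReal.ofReal (∑ n ∈ Finset.range m, (P (V n j)).toReal) := by
          rw [ENNReal.ofReal_sum_of_nonneg (fun i _ => ENNReal.toReal_nonneg)]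
          exact Finset.sum_congr rfl fun i _ => (ENNReal.ofReal_toReal (measure_ne_top _ _)).symm
      _ ≤ ENNReal.ofReal 4 := ENNReal.ofReal_le_ofReal (hocc j m)
  have htpos : ∀ j : ℕ, (0:ℝ) < L + (j:ℝ)*c₂ := fun j => by positivity
  have hEbound : ∀ j n, (P (E (j, n))).toReal ≤
      c₁ / (L + (j:ℝ)*c₂)^2 * (P (V n j)).toReal := by
    intro j n
    have ht := htpos j
    have hind : ∀ ω, Set.indicator (E (j,n)) (fun _ => (1:ℝ)) ω ≤
        (1/(L + (j:ℝ)*c₂)^2) *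
          Set.indicator (V n j) (fun ω' => (σ (n+1) ω' - σ n ω')^2) ω := by
      intro ω
      by_cases hω : ω ∈ E (j,n)
      · rw [Set.indicator_of_mem hω, Set.indicator_of_mem hω.1]
        have h1 : L + (j:ℝ)*c₂ < σ (n+1) ω - σ n ω := hω.2
        have h2 : (L + (j:ℝ)*c₂)^2 ≤ (σ (n+1) ω - σ n ω)^2 := by nlinarith
        calc (1:ℝ) = 1/(L + (j:ℝ)*c₂)^2 * (L + (j:ℝ)*c₂)^2 := by field_simp
          _ ≤ _ := mul_le_mul_of_nonneg_left h2 (by positivity)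
      · rw [Set.indicator_of_notMem hω]
        by_cases hV : ω ∈ V n j
        · rw [Set.indicator_of_mem hV]; positivity
        · rw [Set.indicator_of_notMem hV, mul_zero]
    have h1 : ∫ ω, Set.indicator (E (j,n)) (fun _ => (1:ℝ)) ω ∂P = (P (E (j,n))).toReal := by
      rw [integral_indicator_const (1:ℝ) (hEm (j,n)), smul_eq_mul, mul_one]; rfl
    have hint2 : Integrable (Set.indicator (V n j) (fun ω' => (σ (n+1) ω' - σ n ω')^2)) P :=
      (hintΔ n).indicator (hVm0 n j)
    have h2 : ∫ ω, Set.indicator (E (j,n)) (fun _ => (1:ℝ)) ω ∂P ≤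
        ∫ ω, (1/(L + (j:ℝ)*c₂)^2) *
          Set.indicator (V n j) (fun ω' => (σ (n+1) ω' - σ n ω')^2) ω ∂P :=
      integral_mono ((integrable_const _).indicator (hEm _)) (hint2.const_mul _) hind
    rw [integral_const_mul, integral_indicator (hVm0 n j)] at h2
    have h3 : ∫ ω in V n j, (σ (n+1) ω - σ n ω)^2 ∂P ≤ c₁ * (P (V n j)).toReal :=
      aux_setIntegral_le (ℱ.le n) (hintΔ n) (hVmF n j) (hcond2 n)
    have h4 : (1:ℝ)/(L + (j:ℝ)*c₂)^2 * (c₁ * (P (V n j)).toReal) =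
        c₁ / (L + (j:ℝ)*c₂)^2 * (P (V n j)).toReal := by ring
    rw [h1] at h2
    calc (P (E (j,n))).toReal ≤ _ := h2
      _ ≤ 1/(L + (j:ℝ)*c₂)^2 * (c₁ * (P (V n j)).toReal) :=
          mul_le_mul_of_nonneg_left h3 (by positivity)
      _ = _ := h4
  have hEsumj : ∀ j : ℕ, ∑' n, P (E (j, n)) ≤
      ENNReal.ofReal (4 * c₁ / (L + (j:ℝ)*c₂)^2) := by
    intro j
    have ht := htpos j
    rw [ENNReal.tsum_eq_iSup_sum]
    refine iSup_le fun s => ?_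
    obtain ⟨m, hm⟩ := s.exists_nat_subset_range
    calc ∑ n ∈ s, P (E (j, n)) ≤ ∑ n ∈ Finset.range m, P (E (j, n)) :=
          Finset.sum_le_sum_of_subset hm
      _ = ENNReal.ofReal (∑ n ∈ Finset.range m, (P (E (j, n))).toReal) := by
          rw [ENNReal.ofReal_sum_of_nonneg (fun i _ => ENNReal.toReal_nonneg)]
          exact Finset.sum_congr rfl fun i _ => (ENNReal.ofReal_toReal (measure_ne_top _ _)).symm
      _ ≤ ENNReal.ofReal (4 * c₁ / (L + (j:ℝ)*c₂)^2) := by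
          apply ENNReal.ofReal_le_ofReal
          calc ∑ n ∈ Finset.range m, (P (E (j, n))).toReal
              ≤ ∑ n ∈ Finset.range m, c₁ / (L + (j:ℝ)*c₂)^2 * (P (V n j)).toReal :=
                Finset.sum_le_sum fun n _ => hEbound j n
            _ = c₁ / (L + (j:ℝ)*c₂)^2 * ∑ n ∈ Finset.range m, (P (V n j)).toReal := by
                rw [Finset.mul_sum]
            _ ≤ c₁ / (L + (j:ℝ)*c₂)^2 * 4 :=
                mul_le_mul_of_nonneg_left (hocc j m) (by positivity)
            _ = 4 * c₁ / (L + (j:ℝ)*c₂)^2 := by ring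
  have hjs : ∀ m : ℕ, ∑ j ∈ Finset.range m, 4 * c₁ / (L + (j:ℝ)*c₂)^2 ≤
      4 * c₁ / L^2 + 4 * c₁ / (c₂ * L) := by
    intro m
    rcases Nat.eq_zero_or_pos m with rfl | hmpos
    · simp; positivity
    obtain ⟨k, rfl⟩ := Nat.exists_eq_succ_of_ne_zero hmpos.ne'
    rw [Finset.sum_range_succ']
    have h0 : 4 * c₁ / (L + ((0:ℕ):ℝ)*c₂)^2 = 4 * c₁ / L^2 := by norm_num
    have hterm : ∀ j : ℕ, 4 * c₁ / (L + ((j:ℝ)+1)*c₂)^2 ≤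
        (4 * c₁ / c₂) * (1/(L + (j:ℝ)*c₂) - 1/(L + ((j:ℝ)+1)*c₂)) := by
      intro j
      have hx : (0:ℝ) < L + (j:ℝ)*c₂ := htpos j
      have hy : (0:ℝ) < L + ((j:ℝ)+1)*c₂ := by positivity
      have hsub : 1/(L + (j:ℝ)*c₂) - 1/(L + ((j:ℝ)+1)*c₂) =
          c₂ / ((L + (j:ℝ)*c₂) * (L + ((j:ℝ)+1)*c₂)) := by
        field_simp
        ring
      have hxy : (L + (j:ℝ)*c₂) * (L + ((j:ℝ)+1)*c₂) ≤ (L + ((j:ℝ)+1)*c₂)^2 := by nlinarith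
      rw [hsub, div_mul_div_comm, div_le_div_iff₀ (by positivity) (by positivity)]
      nlinarith [mul_le_mul_of_nonneg_left hxy (show (0:ℝ) ≤ 4*c₁*c₂ by positivity)]
    have hsum : ∑ j ∈ Finset.range k, 4 * c₁ / (L + ((j:ℝ)+1)*c₂)^2 ≤
        (4 * c₁ / c₂) * (1/L - 1/(L + (k:ℝ)*c₂)) := by
      calc ∑ j ∈ Finset.range k, 4 * c₁ / (L + ((j:ℝ)+1)*c₂)^2
          ≤ ∑ j ∈ Finset.range k,
              (4 * c₁ / c₂) * (1/(L + (j:ℝ)*c₂) - 1/(L + ((j:ℝ)+1)*c₂)) :=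
            Finset.sum_le_sum fun j _ => hterm j
        _ = (4 * c₁ / c₂) * ∑ j ∈ Finset.range k,
              (1/(L + (j:ℝ)*c₂) - 1/(L + ((j:ℝ)+1)*c₂)) := by rw [Finset.mul_sum]
        _ = (4 * c₁ / c₂) * (1/(L + ((0:ℕ):ℝ)*c₂) - 1/(L + ((k:ℕ):ℝ)*c₂)) := by
            rw [show (∑ j ∈ Finset.range k,
              (1/(L + (j:ℝ)*c₂) - 1/(L + ((j:ℝ)+1)*c₂))) =
                ∑ j ∈ Finset.range k,
              ((fun i : ℕ => 1/(L + (i:ℝ)*c₂)) j - (fun i : ℕ => 1/(L + (i:ℝ)*c₂)) (j+1)) from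
                Finset.sum_congr rfl (fun j _ => by push_cast; ring_nf),
              Finset.sum_range_sub' (fun i : ℕ => 1/(L + (i:ℝ)*c₂)) k]
        _ = (4 * c₁ / c₂) * (1/L - 1/(L + (k:ℝ)*c₂)) := by norm_num
    have hlast : (4 * c₁ / c₂) * (1/L - 1/(L + (k:ℝ)*c₂)) ≤ 4 * c₁ / (c₂ * L) := by
      have h6 : (0:ℝ) < L + (k:ℝ)*c₂ := htpos k
      have h7 : (4 * c₁ / c₂) * (1/L) = 4 * c₁ / (c₂ * L) := by
        field_simp
      have h8 : (0:ℝ) ≤ 1/(L + (k:ℝ)*c₂) := by positivity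
      nlinarith [div_nonneg (by positivity : (0:ℝ) ≤ 4*c₁) hc₂.le]
    have hcast : ∀ j : ℕ, 4 * c₁ / (L + ((j:ℝ)+1)*c₂)^2 = 4 * c₁ / (L + ((j+1:ℕ):ℝ)*c₂)^2 := by
      intro j; push_cast; ring_nf
    calc (∑ j ∈ Finset.range k, 4 * c₁ / (L + ((j+1:ℕ):ℝ)*c₂)^2) +
          4 * c₁ / (L + ((0:ℕ):ℝ)*c₂)^2
        = (∑ j ∈ Finset.range k, 4 * c₁ / (L + ((j:ℝ)+1)*c₂)^2) + 4 * c₁ / L^2 := by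
          rw [h0]; congr 1; exact Finset.sum_congr rfl fun j _ => (hcast j).symm
      _ ≤ (4 * c₁ / c₂) * (1/L - 1/(L + (k:ℝ)*c₂)) + 4 * c₁ / L^2 := by linarith
      _ ≤ 4 * c₁ / L^2 + 4 * c₁ / (c₂ * L) := by linarith
  have hEtotal : ∑' p : ℕ × ℕ, P (E p) ≤
      ENNReal.ofReal (4 * c₁ / L^2 + 4 * c₁ / (c₂ * L)) := by
    rw [ENNReal.tsum_prod']
    calc ∑' (j : ℕ) (n : ℕ), P (E (j, n))
        ≤ ∑' (j : ℕ), ENNReal.ofReal (4 * c₁ / (L + (j:ℝ)*c₂)^2) :=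
          ENNReal.tsum_le_tsum hEsumj
      _ ≤ ENNReal.ofReal (4 * c₁ / L^2 + 4 * c₁ / (c₂ * L)) := by
          rw [ENNReal.tsum_eq_iSup_sum]
          refine iSup_le fun s => ?_
          obtain ⟨m, hm⟩ := s.exists_nat_subset_range
          calc ∑ j ∈ s, ENNReal.ofReal (4 * c₁ / (L + (j:ℝ)*c₂)^2)
              ≤ ∑ j ∈ Finset.range m, ENNReal.ofReal (4 * c₁ / (L + (j:ℝ)*c₂)^2) :=
                Finset.sum_le_sum_of_subset hm
            _ = ENNReal.ofReal (∑ j ∈ Finset.range m, 4 * c₁ / (L + (j:ℝ)*c₂)^2) :=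
                (ENNReal.ofReal_sum_of_nonneg (fun j _ => by positivity)).symm
            _ ≤ _ := ENNReal.ofReal_le_ofReal (hjs m)
  have hBp : P B ≤ ENNReal.ofReal (c₁ / L^2) := by
    have hind : ∀ ω, Set.indicator B (fun _ => (1:ℝ)) ω ≤ (1/L^2) * (σ 0 ω)^2 := by
      intro ω
      by_cases hω : ω ∈ B
      · rw [Set.indicator_of_mem hω]
        have h1 : a + L < σ 0 ω := hω
        have h2 : L^2 ≤ (σ 0 ω)^2 := by nlinarith
        calc (1:ℝ) = 1/L^2 * L^2 := by field_simp
          _ ≤ _ := mul_le_mul_of_nonneg_left h2 (by positivity)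
      · rw [Set.indicator_of_notMem hω]; positivity
    have h1 : ∫ ω, Set.indicator B (fun _ => (1:ℝ)) ω ∂P = (P B).toReal := by
      rw [integral_indicator_const (1:ℝ) hBm, smul_eq_mul, mul_one]; rfl
    have h2 : ∫ ω, Set.indicator B (fun _ => (1:ℝ)) ω ∂P ≤ ∫ ω, (1/L^2) * (σ 0 ω)^2 ∂P :=
      integral_mono ((integrable_const _).indicator hBm) (hint0.const_mul _) hind
    rw [h1, integral_const_mul] at h2
    have h3 : (P B).toReal ≤ c₁ / L^2 := by
      have h4 : 1/L^2 * ∫ ω, (σ 0 ω)^2 ∂P ≤ 1/L^2 * c₁ :=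
        mul_le_mul_of_nonneg_left hm0 (by positivity)
      calc (P B).toReal ≤ _ := h2
        _ ≤ 1/L^2 * c₁ := h4
        _ = c₁ / L^2 := by ring
    calc P B = ENNReal.ofReal ((P B).toReal) := (ENNReal.ofReal_toReal (measure_ne_top _ _)).symm
      _ ≤ ENNReal.ofReal (c₁ / L^2) := ENNReal.ofReal_le_ofReal h3
  have hjex : ∀ x : ℝ, 0 ≤ x → x < a → ∃ j : ℕ, j ≤ J ∧
      (a - ((j:ℝ)+1)*c₂ < x ∧ x ≤ a - ((j:ℝ)+1)*c₂ + c₂) ∧ (j:ℝ)*c₂ ≤ a - x := by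
    intro x hx0 hxa
    have hax : (0:ℝ) < a - x := by linarith
    set j : ℕ := ⌊(a - x)/c₂⌋₊ with hjdef
    have h1 : (j:ℝ) ≤ (a-x)/c₂ := Nat.floor_le (by positivity)
    have h2 : (a-x)/c₂ < (j:ℝ)+1 := Nat.lt_floor_add_one _
    have h3 : (j:ℝ)*c₂ ≤ a - x := by
      have := (le_div_iff₀ hc₂).1 h1
      linarith
    have h4 : a - x < ((j:ℝ)+1)*c₂ := by
      have := (div_lt_iff₀ hc₂).1 h2
      linarith
    refine ⟨j, ?_, ⟨by linarith, by linarith⟩, h3⟩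
    have h5 : (a-x)/c₂ ≤ a/c₂ := by gcongr <;> linarith
    calc j ≤ ⌊a/c₂⌋₊ := Nat.floor_le_floor h5
      _ ≤ J := Nat.floor_le_ceil _
  have hC : P C = 0 := by
    set W : Ω → ENNReal := fun ω =>
      ∑' n, ∑ j ∈ Finset.range (J+1), Set.indicator (V n j) (fun _ => (1:ENNReal)) ω with hWdef
    have hsummeas : ∀ n : ℕ, Measurable
        (fun ω => ∑ j ∈ Finset.range (J+1), Set.indicator (V n j) (fun _ => (1:ENNReal)) ω) :=
      fun n => Finset.measurable_sum _ fun j _ => measurable_const.indicator (hVm0 n j)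
    have hWm : Measurable W := Measurable.ennreal_tsum hsummeas
    have hWint : ∫⁻ ω, W ω ∂P ≠ ⊤ := by
      have h1 : ∫⁻ ω, W ω ∂P =
          ∑' n, ∑ j ∈ Finset.range (J+1), P (V n j) := by
        rw [hWdef, lintegral_tsum fun n => (hsummeas n).aemeasurable]
        refine tsum_congr fun n => ?_
        rw [lintegral_finset_sum _ fun j _ => measurable_const.indicator (hVm0 n j)]
        refine Finset.sum_congr rfl fun j _ => ?_
        rw [lintegral_indicator (hVm0 n j)]
        simp
      rw [h1, Summable.tsum_finsetSum fun j _ => ENNReal.summable]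
      have h2 : ∑ j ∈ Finset.range (J+1), ∑' n, P (V n j) ≤
          ∑ j ∈ Finset.range (J+1), ENNReal.ofReal 4 :=
        Finset.sum_le_sum fun j _ => hVsum j
      exact (lt_of_le_of_lt h2 (ENNReal.sum_lt_top.2 fun j _ => ENNReal.ofReal_lt_top)).ne
    have hae := ae_lt_top hWm hWint
    rw [measure_eq_zero_iff_ae_notMem]
    filter_upwards [hae, ae_all_iff.2 hnonneg] with ω hW hpos hωC
    have hone : ∀ n : ℕ, (1:ENNReal) ≤
        ∑ j ∈ Finset.range (J+1), Set.indicator (V n j) (fun _ => (1:ENNReal)) ω := by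
      intro n
      obtain ⟨j, hjJ, hjmem, _⟩ := hjex (σ n ω) (hpos n) (hωC n)
      have hmem : ω ∈ V n j := hjmem
      calc (1:ENNReal) = Set.indicator (V n j) (fun _ => (1:ENNReal)) ω :=
            (Set.indicator_of_mem hmem (fun _ => (1:ENNReal))).symm
        _ ≤ _ := Finset.single_le_sum
            (f := fun i => Set.indicator (V n i) (fun _ => (1:ENNReal)) ω)
            (fun i _ => zero_le) (Finset.mem_range.2 (Nat.lt_succ_of_le hjJ))
    have hWeq : W ω = ⊤ := by
      have h2 : ∑' (_ : ℕ), (1:ENNReal) ≤ W ω := ENNReal.tsum_le_tsum hone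
      rw [ENNReal.tsum_const_eq_top_of_ne_zero one_ne_zero] at h2
      exact top_le_iff.1 h2
    exact absurd hWeq hW.ne
  have hcover : ({ω | ∃ n : ℕ, σ n ω ∈ Set.Icc a (a + L)}ᶜ : Set Ω) ≤ᵐ[P]
      ((B ∪ ((⋃ p, E p) ∪ C)) : Set Ω) := by
    filter_upwards [ae_all_iff.2 hnonneg] with ω hpos
    simp only [le_Prop_eq]
    intro hωn
    have hnotin : ∀ n : ℕ, ¬ (a ≤ σ n ω ∧ σ n ω ≤ a + L) := by
      intro n hn
      exact hωn ⟨n, hn⟩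
    have hnot : ∀ n, σ n ω < a ∨ a + L < σ n ω := by
      intro n
      rcases lt_or_ge (σ n ω) a with h | h
      · exact Or.inl h
      rcases lt_or_ge (a + L) (σ n ω) with h' | h'
      · exact Or.inr h'
      exact absurd ⟨h, h'⟩ (hnotin n)
    by_cases hall : ∀ n, σ n ω < a
    · exact Or.inr (Or.inr hall)
    · push_neg at hall
      have hfind := Nat.find_spec hall
      have hgt : a + L < σ (Nat.find hall) ω := (hnot _).resolve_left (not_lt.2 hfind)
      by_cases h0 : Nat.find hall = 0
      · exact Or.inl (by rw [h0] at hgt; exact hgt)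
      · obtain ⟨k, hk⟩ := Nat.exists_eq_succ_of_ne_zero h0
        have hklt : σ k ω < a := by
          have h6 := Nat.find_min hall (m := k) (by omega)
          push_neg at h6
          exact h6
        obtain ⟨j, hjJ, ⟨hj1, hj2⟩, hj3⟩ := hjex (σ k ω) (hpos k) hklt
        refine Or.inr (Or.inl (Set.mem_iUnion.2 ⟨(j, k), ⟨⟨hj1, hj2⟩, ?_⟩⟩))
        have h7 : a + L < σ (k+1) ω := by rw [hk] at hgt; exact hgt
        simp only [Set.mem_setOf_eq]
        linarith
  have hG : MeasurableSet {ω | ∃ n : ℕ, σ n ω ∈ Set.Icc a (a + L)} := by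
    have heq : {ω | ∃ n : ℕ, σ n ω ∈ Set.Icc a (a + L)} =
        ⋃ n, (σ n) ⁻¹' (Set.Icc a (a + L)) := by
      ext ω; simp [Set.mem_iUnion]
    rw [heq]
    exact MeasurableSet.iUnion fun n => (hσm n) measurableSet_Icc
  have hfail : P ({ω | ∃ n : ℕ, σ n ω ∈ Set.Icc a (a + L)}ᶜ) ≤ ENNReal.ofReal δ := by
    calc P ({ω | ∃ n : ℕ, σ n ω ∈ Set.Icc a (a + L)}ᶜ)
        ≤ P (B ∪ ((⋃ p, E p) ∪ C)) := measure_mono_ae hcover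
      _ ≤ P B + P ((⋃ p, E p) ∪ C) := measure_union_le _ _
      _ ≤ P B + (P (⋃ p, E p) + P C) := add_le_add le_rfl (measure_union_le _ _)
      _ = P B + P (⋃ p, E p) := by rw [hC, add_zero]
      _ ≤ ENNReal.ofReal (c₁ / L^2) + ENNReal.ofReal (4 * c₁ / L^2 + 4 * c₁ / (c₂ * L)) :=
          add_le_add hBp ((measure_iUnion_le _).trans hEtotal)
      _ = ENNReal.ofReal (c₁ / L^2 + (4 * c₁ / L^2 + 4 * c₁ / (c₂ * L))) :=
          (ENNReal.ofReal_add (by positivity) (by positivity)).symm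
      _ ≤ ENNReal.ofReal δ := by
          apply ENNReal.ofReal_le_ofReal
          have h9 : c₁ / L^2 + (4 * c₁ / L^2 + 4 * c₁ / (c₂ * L)) =
              5 * c₁ / L^2 + 4 * c₁ / (c₂ * L) := by ring
          linarith
  have hPG := prob_compl_eq_one_sub (μ := P) hG
  calc ENNReal.ofReal (1 - δ) = 1 - ENNReal.ofReal δ := by
        rw [ENNReal.ofReal_sub 1 hδ.le, ENNReal.ofReal_one]
    _ ≤ 1 - P ({ω | ∃ n : ℕ, σ n ω ∈ Set.Icc a (a + L)}ᶜ) := tsub_le_tsub_left hfail 1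
    _ = P {ω | ∃ n : ℕ, σ n ω ∈ Set.Icc a (a + L)} := by
        rw [hPG, ENNReal.sub_sub_cancel ENNReal.one_ne_top prob_le_one]
end
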